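/- arXiv:2003.11998 — 3 statements merged into one kernel-verified Lean document; each statement's English description precedes it below -/
import Mathlib

section
/- Let A be a real symmetric positive definite matrix with distinct eigenvalues 0 < λ₁ < ⋯ < λ_k and spectral projectors E₁,…,E_k. Fix two index pairs (i,j) and (r,s) with δ = (E₁)_{i,j}−(E₁)_{r,s}, …, ((E_k)_{i,j}−(E_k)_{r,s}) a nonzero vector. Then there exists a finite integer n such that for all l ≥ 0, (A^{n+l})_{i,j} ≠ (A^{n+l})_{r,s}. -/
open Matrix

/-- Let A be real SPD with distinct positive eigenvalues and spectral
projectors E_t.  If the vector δ_t = (E_t)_{i,j} − (E_t)_{r,s} is nonzero, then there is a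
finite n with (A^{n+l})_{i,j} ≠ (A^{n+l})_{r,s} for all l ≥ 0. -/
theorem stmt10 {m k : ℕ} (A : Matrix (Fin m) (Fin m) ℝ) (hA : A.PosDef)
    (lam : Fin k → ℝ) (hpos : ∀ t, 0 < lam t) (hmono : StrictMono lam)
    (E : Fin k → Matrix (Fin m) (Fin m) ℝ)
    (hsum : ∑ t, E t = 1)
    (hspec : A = ∑ t, lam t • E t)
    (hproj : ∀ t, E t * E t = E t)
    (horth : ∀ t s, t ≠ s → E t * E s = 0)
    (i j r s : Fin m)
    (hδ : ∃ t, E t i j - E t r s ≠ 0) :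
    ∃ n : ℕ, ∀ l : ℕ, (A ^ (n + l)) i j ≠ (A ^ (n + l)) r s := by
  classical
  -- spectral powers
  have powsum : ∀ p : ℕ, A ^ p = ∑ t, (lam t ^ p) • E t := by
    intro p
    induction p with
    | zero => simp [hsum]
    | succ p ih =>
      rw [pow_succ, ih, hspec, Finset.sum_mul]
      refine Finset.sum_congr rfl (fun t _ => ?_)
      rw [Matrix.mul_sum]
      rw [Finset.sum_eq_single t]
      · rw [smul_mul_smul_comm, hproj t, pow_succ]
      · intro b _ hb
        rw [smul_mul_smul_comm, horth t b (Ne.symm hb), smul_zero]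
      · intro h; exact absurd (Finset.mem_univ t) h
  set δ : Fin k → ℝ := fun t => E t i j - E t r s with hδdef
  -- entry difference
  have entry : ∀ p : ℕ, (A ^ p) i j - (A ^ p) r s = ∑ t, lam t ^ p * δ t := by
    intro p
    rw [powsum p]
    simp [Matrix.sum_apply, δ, mul_sub, Finset.sum_sub_distrib]
  obtain ⟨t0, ht0⟩ := hδ
  set S : Finset (Fin k) := Finset.univ.filter (fun t => δ t ≠ 0) with hS
  have hSne : S.Nonempty := ⟨t0, by simp [hS, δ, ht0]⟩
  set T := S.max' hSne with hT
  have hδT : δ T ≠ 0 := by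
    have := S.max'_mem hSne
    simpa [hS] using this
  have hle : ∀ t, δ t ≠ 0 → t ≤ T := by
    intro t ht
    exact S.le_max' t (by simp [hS, ht])
  -- the tail tends to 0
  have htend : Filter.Tendsto (fun p : ℕ => ∑ t ∈ Finset.univ.erase T, (lam t / lam T) ^ p * δ t)
      Filter.atTop (nhds 0) := by
    have : Filter.Tendsto (fun p : ℕ => ∑ t ∈ Finset.univ.erase T, (lam t / lam T) ^ p * δ t)
        Filter.atTop (nhds (∑ t ∈ Finset.univ.erase T, (0 : ℝ))) := by
      refine tendsto_finset_sum _ (fun t ht => ?_)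
      by_cases hδt : δ t = 0
      · simp only [hδt, mul_zero]
        exact tendsto_const_nhds
      · have htT : t < T := lt_of_le_of_ne (hle t hδt) (Finset.ne_of_mem_erase ht)
        have hr0 : 0 ≤ lam t / lam T := le_of_lt (div_pos (hpos t) (hpos T))
        have hr1 : lam t / lam T < 1 := by
          rw [div_lt_one (hpos T)]
          exact hmono htT
        have := (tendsto_pow_atTop_nhds_zero_of_lt_one hr0 hr1).mul_const (δ t)
        simpa using this
    simpa using this
  have hev : ∀ᶠ p in Filter.atTop,
      |∑ t ∈ Finset.univ.erase T, (lam t / lam T) ^ p * δ t| < |δ T| := by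
    have h2 : Filter.Tendsto (fun p : ℕ => |∑ t ∈ Finset.univ.erase T, (lam t / lam T) ^ p * δ t|)
        Filter.atTop (nhds 0) := by simpa using htend.abs
    exact h2.eventually_lt_const (abs_pos.mpr hδT)
  obtain ⟨N, hN⟩ := Filter.eventually_atTop.mp hev
  refine ⟨N, fun l => ?_⟩
  set p := N + l with hp
  have hpN : N ≤ p := Nat.le_add_right N l
  have key : ∑ t, lam t ^ p * δ t ≠ 0 := by
    have hlamT : (0:ℝ) < lam T ^ p := pow_pos (hpos T) p
    have hsplit : ∑ t, lam t ^ p * δ t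
        = lam T ^ p * (δ T + ∑ t ∈ Finset.univ.erase T, (lam t / lam T) ^ p * δ t) := by
      rw [← Finset.add_sum_erase _ _ (Finset.mem_univ T)]
      rw [mul_add, Finset.mul_sum]
      congr 1
      refine Finset.sum_congr rfl (fun t _ => ?_)
      rw [div_pow]
      field_simp
    rw [hsplit]
    refine mul_ne_zero (ne_of_gt hlamT) ?_
    intro hzero
    have h1 := hN p hpN
    have h3 : ∑ t ∈ Finset.univ.erase T, (lam t / lam T) ^ p * δ t = -δ T := by linarith
    rw [h3, abs_neg] at h1
    exact lt_irrefl _ h1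
  intro heq
  apply key
  rw [← entry p, heq, sub_self]
end

section
/- Let p₁ < p₂ < ⋯ < p_n be positive reals satisfying p₁ > m and p_{i+1} > m·p_{i-1+1}² (i.e., p_{i+1} > m p_i² for each i). Then the n(n+1)/2 pairwise products p_i p_j (i ≤ j) are totally ordered: p₁p₁ < p₁p₂ < p₂p₂ < p₁p₃ < ⋯ < p_np_n, and the ratio between any two adjacent products in this order exceeds m·p₁. -/
/-- For widely-spaced positive reals (p 0 > m, p (i+1) > m·(p i)²), the
pairwise products p_i p_j (i ≤ j) are totally ordered (first by larger factor, then by the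
smaller one) and the ratio between adjacent products in this order exceeds m·p₁:
within a fixed larger factor j, the successor of p i * p j is p (i+1) * p j, and the
successor of p j * p j is p 0 * p (j+1). -/
theorem stmt16 (m : ℕ) (hm : 1 ≤ m) (p : ℕ → ℝ)
    (hpos : ∀ i, 0 < p i)
    (h0 : (m : ℝ) < p 0)
    (hrec : ∀ i, (m : ℝ) * (p i) ^ 2 < p (i + 1)) :
    (∀ i j : ℕ, i < j → (m : ℝ) * p 0 * (p i * p j) < p (i + 1) * p j) ∧
    (∀ j : ℕ, (m : ℝ) * p 0 * (p j * p j) < p 0 * p (j + 1)) := by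
  have hm1 : (1 : ℝ) ≤ (m : ℝ) := by exact_mod_cast hm
  have hgt1 : ∀ i, 1 < p i := by
    intro i
    induction i with
    | zero => linarith
    | succ k ih =>
      have := hrec k
      nlinarith [hpos k]
  have hmono : ∀ i, p i < p (i + 1) := by
    intro i
    have := hrec i
    have h1 := hgt1 i
    nlinarith
  have hp0le : ∀ i, p 0 ≤ p i := by
    intro i
    induction i with
    | zero => exact le_refl _
    | succ k ih => exact ih.trans (hmono k).le
  constructor
  · intro i j _
    have hij : (m : ℝ) * p 0 * p i < p (i + 1) := by
      have := hrec i
      have := hp0le i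
      nlinarith [hpos i, hpos 0, mul_nonneg (mul_nonneg (by linarith : (0:ℝ) ≤ (m:ℝ)) (hpos i).le) (by linarith : (0:ℝ) ≤ p i - p 0)]
    have := hpos j
    nlinarith [hpos i, hpos 0]
  · intro j
    have := hrec j
    have := hpos 0
    nlinarith
end

section
/- Let p₁ < ⋯ < p_n be 'widely-spaced' positive reals (p₁ > m, p_{i+1} > m p_i²). If two multisets S and T, each consisting of m products of pairs p_a p_b (with repetition allowed), have equal sums Σ S = Σ T, then S = T as multisets. -/
/-!
If every product `p a * p b` exceeds `m` times every smaller one, then the largest term of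
`S + T` lies in both multisets: otherwise one side contains it while the other is a sum of at most
`m` terms each below `1/m` of it. Cancelling that term and inducting gives `S = T`. For
widely-spaced `p` the products do have this gap, as one sees by comparing the larger indices.
-/

namespace Multiset

variable {α : Type*} [Semiring α] [LinearOrder α] [IsStrictOrderedRing α]

theorem sum_lt_of_forall_natCast_mul_lt {T : Multiset α} {m : ℕ} {x : α} (hx : 0 < x)
    (hcard : card T ≤ m) (h : ∀ y ∈ T, (m : α) * y < x) : T.sum < x := by
  rcases eq_or_ne T 0 with rfl | hT
  · simpa using hx
  refine lt_of_mul_lt_mul_left ?_ (Nat.cast_nonneg (α := α) m)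
  calc (m : α) * T.sum = (T.map fun y => (m : α) * y).sum := by rw [sum_map_mul_left, map_id']
    _ < (T.map fun _ => x).sum := sum_lt_sum_of_nonempty hT h
    _ = card T * x := by simp
    _ ≤ m * x := by gcongr

section Gap

variable {P : Set α} {m : ℕ} (hpos : ∀ x ∈ P, 0 < x)
  (hgap : ∀ x ∈ P, ∀ y ∈ P, y < x → (m : α) * y < x)
include hpos hgap

theorem mem_of_sum_eq_of_forall_le {S T : Multiset α} (hS : ∀ x ∈ S, x ∈ P)
    (hT : ∀ y ∈ T, y ∈ P) (hTcard : card T ≤ m) (hsum : S.sum = T.sum) {x : α} (hxS : x ∈ S)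
    (hxT : ∀ y ∈ T, y ≤ x) : x ∈ T := by
  by_contra hx
  have hTsum : T.sum < x := sum_lt_of_forall_natCast_mul_lt (hpos x (hS x hxS)) hTcard
    fun y hy => hgap x (hS x hxS) y (hT y hy) ((hxT y hy).lt_of_ne (ne_of_mem_of_not_mem hy hx))
  have hSsum : x ≤ S.sum := single_le_sum (fun y hy => (hpos y (hS y hy)).le) x hxS
  exact hTsum.not_ge (hsum ▸ hSsum)

theorem eq_of_sum_eq_of_gap {S T : Multiset α} (hS : ∀ x ∈ S, x ∈ P) (hT : ∀ y ∈ T, y ∈ P)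
    (hScard : card S ≤ m) (hTcard : card T ≤ m) (hsum : S.sum = T.sum) : S = T := by
  induction S using strongInductionOn generalizing T with
  | ih S ih =>
  rcases eq_or_ne (S + T) 0 with hST | hST
  · rw [add_eq_zero] at hST
    rw [hST.1, hST.2]
  obtain ⟨x, hx, hmax⟩ := exists_max_image id hST
  have hxST : x ∈ S ∧ x ∈ T := by
    rcases mem_add.1 hx with hxS | hxT
    · exact ⟨hxS, mem_of_sum_eq_of_forall_le hpos hgap hS hT hTcard hsum hxS
        fun y hy => hmax y (mem_add.2 (.inr hy))⟩
    · exact ⟨mem_of_sum_eq_of_forall_le hpos hgap hT hS hScard hsum.symm hxT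
        fun y hy => hmax y (mem_add.2 (.inl hy)), hxT⟩
  obtain ⟨hxS, hxT⟩ := hxST
  have hsum' : (S.erase x).sum = (T.erase x).sum := by
    rw [← sum_erase hxS, ← sum_erase hxT] at hsum
    exact add_left_cancel hsum
  rw [← cons_erase hxS, ← cons_erase hxT,
    ih (S.erase x) (erase_lt.2 hxS) (fun y hy => hS y (mem_of_mem_erase hy))
      (fun y hy => hT y (mem_of_mem_erase hy)) ((card_erase_le).trans hScard)
      ((card_erase_le).trans hTcard) hsum']

end Gap

end Multiset

structure WidelySpaced (m : ℕ) (p : ℕ → ℝ) : Prop where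
  m_pos : 0 < m
  natCast_lt_zero : (m : ℝ) < p 0
  natCast_mul_sq_lt_succ : ∀ i, (m : ℝ) * p i ^ 2 < p (i + 1)

namespace WidelySpaced

variable {m : ℕ} {p : ℕ → ℝ} (hw : WidelySpaced m p)
include hw

theorem one_le_natCast : (1 : ℝ) ≤ m := Nat.one_le_cast.2 hw.m_pos

theorem natCast_lt (i : ℕ) : (m : ℝ) < p i := by
  induction i with
  | zero => exact hw.natCast_lt_zero
  | succ i ih =>
    have := hw.natCast_mul_sq_lt_succ i
    nlinarith [hw.one_le_natCast]

theorem one_lt (i : ℕ) : 1 < p i := hw.one_le_natCast.trans_lt (hw.natCast_lt i)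

theorem natCast_mul_lt_succ (i : ℕ) : (m : ℝ) * p i < p (i + 1) := by
  have h1 := hw.one_lt i
  calc (m : ℝ) * p i < m * p i ^ 2 := by
        gcongr
        · exact_mod_cast hw.m_pos
        · nlinarith
    _ < p (i + 1) := hw.natCast_mul_sq_lt_succ i

theorem pos (i : ℕ) : 0 < p i := zero_lt_one.trans (hw.one_lt i)

theorem strictMono : StrictMono p :=
  strictMono_nat_of_lt_succ fun i =>
    (le_mul_of_one_le_left (hw.pos i).le hw.one_le_natCast).trans_lt (hw.natCast_mul_lt_succ i)

theorem natCast_mul_lt_of_mul_lt {a b c d : ℕ} (hab : a ≤ b) (hcd : c ≤ d)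
    (h : p c * p d < p a * p b) : (m : ℝ) * (p c * p d) < p a * p b := by
  have hb := hw.pos b
  have hd := hw.pos d
  rcases lt_trichotomy d b with hdb | rfl | hbd
  · calc (m : ℝ) * (p c * p d) ≤ m * p d ^ 2 := by
          rw [sq]; gcongr; exact hw.strictMono.monotone hcd
      _ < p (d + 1) := hw.natCast_mul_sq_lt_succ d
      _ ≤ p b := hw.strictMono.monotone hdb
      _ < p a * p b := lt_mul_of_one_lt_left hb (hw.one_lt a)
  · have hca : c < a := hw.strictMono.lt_iff_lt.1 (lt_of_mul_lt_mul_right h hd.le)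
    calc (m : ℝ) * (p c * p d) = m * p c * p d := by ring
      _ < p (c + 1) * p d := by gcongr; exact hw.natCast_mul_lt_succ c
      _ ≤ p a * p d := by gcongr; exact hw.strictMono.monotone hca
  · refine absurd h (lt_asymm ?_)
    calc p a * p b ≤ p b ^ 2 := by rw [sq]; gcongr; exact hw.strictMono.monotone hab
      _ ≤ m * p b ^ 2 := le_mul_of_one_le_left (sq_nonneg _) hw.one_le_natCast
      _ < p (b + 1) := hw.natCast_mul_sq_lt_succ b
      _ ≤ p d := hw.strictMono.monotone hbd
      _ < p c * p d := lt_mul_of_one_lt_left hd (hw.one_lt c)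

end WidelySpaced

theorem stmt17_general (m : ℕ) (hm : 0 < m) (p : ℕ → ℝ)
    (h0 : (m : ℝ) < p 0)
    (hrec : ∀ i, (m : ℝ) * (p i) ^ 2 < p (i + 1))
    (S T : Multiset ℝ)
    (hScard : Multiset.card S = m) (hTcard : Multiset.card T = m)
    (hS : ∀ x ∈ S, ∃ a b : ℕ, a ≤ b ∧ x = p a * p b)
    (hT : ∀ x ∈ T, ∃ a b : ℕ, a ≤ b ∧ x = p a * p b)
    (hsum : S.sum = T.sum) :
    S = T := by
  have hw : WidelySpaced m p := ⟨hm, h0, hrec⟩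
  refine Multiset.eq_of_sum_eq_of_gap (P := {x | ∃ a b : ℕ, a ≤ b ∧ x = p a * p b}) ?_ ?_
    hS hT hScard.le hTcard.le hsum
  · rintro _ ⟨a, b, -, rfl⟩
    exact mul_pos (hw.pos a) (hw.pos b)
  · rintro _ ⟨a, b, hab, rfl⟩ _ ⟨c, d, hcd, rfl⟩ h
    exact hw.natCast_mul_lt_of_mul_lt hab hcd h

/-- For widely-spaced positive reals, two multisets of m pairwise products
p_a·p_b with equal sums must be equal as multisets. -/
theorem stmt17 (m : ℕ) (hm : 0 < m) (p : ℕ → ℝ)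
    (hpos : ∀ i, 0 < p i)
    (h0 : (m : ℝ) < p 0)
    (hrec : ∀ i, (m : ℝ) * (p i) ^ 2 < p (i + 1))
    (S T : Multiset ℝ)
    (hScard : Multiset.card S = m) (hTcard : Multiset.card T = m)
    (hS : ∀ x ∈ S, ∃ a b : ℕ, a ≤ b ∧ x = p a * p b)
    (hT : ∀ x ∈ T, ∃ a b : ℕ, a ≤ b ∧ x = p a * p b)
    (hsum : S.sum = T.sum) :
    S = T :=
  stmt17_general m hm p h0 hrec S T hScard hTcard hS hT hsum
end
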